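/- arXiv:1506.02820 — 2 statements merged into one kernel-verified Lean document; each statement's English description precedes it below -/
import Mathlib

section
/- Let A and B be linear cyclic codes over F_q with parameters [n_a, k_a, d_a] and [n_b, k_b, d_b] respectively, where gcd(n_a, n_b) = 1. Then the product code A ⊗ B, serialized by the Chinese-remainder ordering, is a linear cyclic code over F_q of length n_a·n_b, dimension k_a·k_b, and minimum Hamming distance d_a·d_b. -/
/-!
A nonzero array in `A ⊗ B` has a nonzero row, of weight at least `d_b`; each of its nonzero
entries lies in a nonzero column, of weight at least `d_a`, so the array has weight at least
`d_a d_b`, and the outer product of two minimum-weight words attains this.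

If `u` is a basis of `A`, then `r ↦ ∑ₛ uₛ ⊗ rₛ` is an isomorphism from `B^{k_a}` onto `A ⊗ B`,
which gives the dimension: its inverse applies a left inverse of `u` to every column, and a
linear map applied to every column sends each row to a linear combination of rows, hence keeps
the rows in `B`.

By the Chinese remainder theorem `ℓ ↦ (ℓ mod n_a, ℓ mod n_b)` is a bijection carrying the
cyclic shift `ℓ ↦ ℓ - 1` to the simultaneous cyclic shift of rows and columns, and the latter
preserves `A ⊗ B`.
-/

open Module Function Finset

theorem Fin.ofNat_val_sub_of_dvd {m N : ℕ} [NeZero m] (h : m ∣ N) (a b : Fin N) :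
    Fin.ofNat m (a - b).val = Fin.ofNat m a - Fin.ofNat m b := by
  have hb : N - b + b ≡ m - b % m + b [MOD m] := calc
    N - b + b = N := by omega
    _ ≡ m [MOD m] := (Nat.modEq_zero_iff_dvd.2 h).trans (Nat.modEq_zero_iff_dvd.2 dvd_rfl).symm
    _ = m - b % m + b % m := by have := Nat.mod_lt b (NeZero.pos m); omega
    _ ≡ m - b % m + b [MOD m] := (Nat.mod_modEq b m).add_left _
  ext
  rw [Fin.val_sub, Fin.val_ofNat, Fin.val_sub, Fin.val_ofNat, Fin.val_ofNat, Nat.mod_mod_of_dvd _ h]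
  exact (Nat.ModEq.add_right_cancel' b hb).add (Nat.mod_modEq a m).symm

section CRT

variable {m n : ℕ} [NeZero m] [NeZero n]

theorem Fin.ofNat_prod_injective_of_coprime (h : m.Coprime n) :
    Injective fun ℓ : Fin (m * n) => (Fin.ofNat m ℓ, Fin.ofNat n ℓ) := by
  intro a b hab
  simp only [Prod.mk.injEq, Fin.ext_iff, Fin.val_ofNat] at hab
  exact Fin.ext <| ((Nat.modEq_and_modEq_iff_modEq_mul h).1 hab).eq_of_lt_of_lt a.isLt b.isLt

noncomputable def finMulEquivProdOfCoprime (h : m.Coprime n) : Fin (m * n) ≃ Fin m × Fin n :=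
  Equiv.ofBijective _ <| (Fintype.bijective_iff_injective_and_card _).2
    ⟨Fin.ofNat_prod_injective_of_coprime h, by simp⟩

theorem finMulEquivProdOfCoprime_sub_one (h : m.Coprime n) (ℓ : Fin (m * n)) :
    finMulEquivProdOfCoprime h (ℓ - 1) = finMulEquivProdOfCoprime h ℓ - 1 := by
  have hone {k : ℕ} [NeZero k] (hk : k ∣ m * n) : Fin.ofNat k (1 : Fin (m * n)).val = 1 := by
    ext; simp [Nat.mod_mod_of_dvd _ hk]
  simp only [finMulEquivProdOfCoprime, Equiv.ofBijective_apply, Prod.ext_iff, Prod.fst_sub,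
    Prod.snd_sub, Prod.fst_one, Prod.snd_one]
  constructor
  · rw [Fin.ofNat_val_sub_of_dvd (dvd_mul_right m n), hone (dvd_mul_right m n)]
  · rw [Fin.ofNat_val_sub_of_dvd (dvd_mul_left n m), hone (dvd_mul_left n m)]

end CRT

section ProductCode

variable {F ι ι' κ N : Type*} [Field F]

def productCode (A : Submodule F (ι → F)) (B : Submodule F (κ → F)) :
    Submodule F (ι → κ → F) where
  carrier := {M | (∀ j, (fun i => M i j) ∈ A) ∧ ∀ i, M i ∈ B}
  add_mem' hM hM' := ⟨fun j => A.add_mem (hM.1 j) (hM'.1 j), fun i => B.add_mem (hM.2 i) (hM'.2 i)⟩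
  zero_mem' := ⟨fun _ => A.zero_mem, fun _ => B.zero_mem⟩
  smul_mem' c _ hM := ⟨fun j => A.smul_mem c (hM.1 j), fun i => B.smul_mem c (hM.2 i)⟩

theorem outer_mem_productCode {A : Submodule F (ι → F)} {B : Submodule F (κ → F)} {a : ι → F}
    {b : κ → F} (ha : a ∈ A) (hb : b ∈ B) : (fun i j => a i * b j) ∈ productCode A B := by
  refine ⟨fun j => ?_, fun i => ?_⟩
  · have hcol : (fun i => a i * b j) = b j • a := funext fun i => mul_comm _ _
    exact hcol ▸ A.smul_mem (b j) ha
  · exact B.smul_mem (a i) hb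

def LinearMap.mapColumns (L : (ι' → F) →ₗ[F] ι → F) (κ : Type*) :
    (ι' → κ → F) →ₗ[F] ι → κ → F where
  toFun M i j := L (fun i' => M i' j) i
  map_add' M M' := by ext i j; exact congrFun (L.map_add (fun i' => M i' j) (fun i' => M' i' j)) i
  map_smul' c M := by ext i j; exact congrFun (L.map_smul c fun i' => M i' j) i

theorem LinearMap.mapColumns_apply_mem [Finite ι'] (L : (ι' → F) →ₗ[F] ι → F)
    {B : Submodule F (κ → F)} {M : ι' → κ → F} (hM : ∀ i', M i' ∈ B) (i : ι) :
    L.mapColumns κ M i ∈ B := by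
  classical
  have := Fintype.ofFinite ι'
  have hrow : L.mapColumns κ M i = ∑ i', L (fun i'' => if i' = i'' then 1 else 0) i • M i' := by
    ext j
    simp only [mapColumns, coe_mk, AddHom.coe_mk, L.pi_apply_eq_sum_univ (fun i' => M i' j),
      Finset.sum_apply, Pi.smul_apply, smul_eq_mul, mul_comm]
  rw [hrow]
  exact B.sum_mem fun i' _ => B.smul_mem _ (hM i')

theorem LinearMap.mapColumns_injective {L : (ι' → F) →ₗ[F] ι → F} (hL : Injective L) :
    Injective (L.mapColumns κ) := by
  intro M M' h
  ext i' j
  exact congrFun (hL (funext fun i => congrFun (congrFun h i) j)) i'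

theorem finrank_productCode [Finite ι] [Finite κ] (A : Submodule F (ι → F))
    (B : Submodule F (κ → F)) :
    finrank F (productCode A B) = finrank F A * finrank F B := by
  set a := finrank F A
  let u : (Fin a → F) →ₗ[F] ι → F := A.subtype ∘ₗ (finBasis F A).equivFun.symm.toLinearMap
  have hu : Injective u := A.injective_subtype.comp (LinearEquiv.injective _)
  have hrange : LinearMap.range u = A := by
    rw [LinearMap.range_comp, LinearEquiv.range, Submodule.map_top, Submodule.range_subtype]
  obtain ⟨q, hq⟩ := u.exists_leftInverse_of_injective (LinearMap.ker_eq_bot.2 hu)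
  let Φ : (Fin a → B) →ₗ[F] ι → κ → F := u.mapColumns κ ∘ₗ B.subtype.compLeft (Fin a)
  have hΦ : Injective Φ :=
    (LinearMap.mapColumns_injective hu).comp fun _ _ h => B.injective_subtype.comp_left h
  have hΦrange : LinearMap.range Φ = productCode A B := by
    apply le_antisymm
    · rintro _ ⟨r, rfl⟩
      exact ⟨fun j => hrange ▸ LinearMap.mem_range_self u _,
        u.mapColumns_apply_mem fun s => (r s).2⟩
    · intro M hM
      refine ⟨fun s => ⟨q.mapColumns κ M s, q.mapColumns_apply_mem hM.2 s⟩, ?_⟩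
      ext i j
      obtain ⟨x, hx⟩ : (fun i => M i j) ∈ LinearMap.range u := hrange ▸ hM.1 j
      show u (q fun i => M i j) i = M i j
      rw [← hx, ← LinearMap.comp_apply q u, hq, LinearMap.id_apply, hx]
  rw [← hΦrange, LinearMap.finrank_range_of_inj hΦ, finrank_pi_fintype]
  simp [a]

variable (F) in
def serialize (e : N ≃ ι × κ) : (ι → κ → F) ≃ₗ[F] N → F :=
  (LinearEquiv.curry F F ι κ).symm ≪≫ₗ LinearEquiv.funCongrLeft F F e

@[simp]
theorem serialize_apply (e : N ≃ ι × κ) (M : ι → κ → F) (ℓ : N) :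
    serialize F e M ℓ = M (e ℓ).1 (e ℓ).2 :=
  rfl

def serializedProductCode (e : N ≃ ι × κ) (A : Submodule F (ι → F)) (B : Submodule F (κ → F)) :
    Submodule F (N → F) :=
  (productCode A B).map (serialize F e).toLinearMap

variable {A : Submodule F (ι → F)} {B : Submodule F (κ → F)} {e : N ≃ ι × κ}

theorem mem_serializedProductCode {w : N → F} :
    w ∈ serializedProductCode e A B ↔ ∃ M ∈ productCode A B, serialize F e M = w :=
  Iff.rfl

theorem finrank_serializedProductCode [Finite ι] [Finite κ] :
    finrank F (serializedProductCode e A B) = finrank F A * finrank F B := by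
  rw [serializedProductCode, LinearEquiv.finrank_map_eq, finrank_productCode]

theorem shift_mem_serializedProductCode [Sub N] [Sub ι] [Sub κ] {t : N} {g : ι} {h : κ}
    (he : ∀ ℓ, e (ℓ - t) = e ℓ - (g, h)) (hA : ∀ c ∈ A, (fun i => c (i - g)) ∈ A)
    (hB : ∀ c ∈ B, (fun j => c (j - h)) ∈ B) {w : N → F} (hw : w ∈ serializedProductCode e A B) :
    (fun ℓ => w (ℓ - t)) ∈ serializedProductCode e A B := by
  obtain ⟨M, hM, rfl⟩ := hw
  refine ⟨fun i j => M (i - g) (j - h), ⟨fun j => hA _ (hM.1 _), fun i => hB _ (hM.2 _)⟩, ?_⟩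
  ext ℓ
  simp [he]

section Weights

variable [Fintype ι] [Fintype κ] [Fintype N] [DecidableEq F]

def Submodule.nonzeroWeights (C : Submodule F (ι → F)) : Set ℕ :=
  {w | ∃ c ∈ C, c ≠ 0 ∧ w = hammingNorm c}

theorem hammingNorm_serialize (e : N ≃ ι × κ) (M : ι → κ → F) :
    hammingNorm (serialize F e M) = ∑ j, hammingNorm fun i => M i j := calc
  hammingNorm (serialize F e M) = ∑ ℓ, if M (e ℓ).1 (e ℓ).2 ≠ 0 then 1 else 0 := card_filter _ _
  _ = ∑ p : ι × κ, if M p.1 p.2 ≠ 0 then 1 else 0 := Fintype.sum_equiv e _ _ fun _ => rfl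
  _ = ∑ j, ∑ i, if M i j ≠ 0 then 1 else 0 := Fintype.sum_prod_type_right _
  _ = ∑ j, hammingNorm fun i => M i j := sum_congr rfl fun _ _ => (card_filter _ _).symm

theorem sum_hammingNorm_outer (a : ι → F) (b : κ → F) :
    ∑ j, hammingNorm (fun i => a i * b j) = hammingNorm a * hammingNorm b := calc
  ∑ j, hammingNorm (fun i => a i * b j) = ∑ j, hammingNorm a * if b j ≠ 0 then 1 else 0 := by
    refine sum_congr rfl fun j _ => ?_
    by_cases hbj : b j = 0
    · simp only [hbj, mul_zero, ne_eq, not_true_eq_false, if_false]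
      exact hammingNorm_zero
    · rw [if_pos hbj, mul_one]
      exact hammingNorm_comp (fun _ c => c * b j) (fun _ => mul_left_injective₀ hbj)
        fun _ => zero_mul _
  _ = hammingNorm a * hammingNorm b := by rw [← mul_sum, ← card_filter]; rfl

theorem le_sum_hammingNorm_of_mem_productCode {da db : ℕ} (hA : da ∈ lowerBounds A.nonzeroWeights)
    (hB : db ∈ lowerBounds B.nonzeroWeights) {M : ι → κ → F} (hM : M ∈ productCode A B)
    (hM0 : M ≠ 0) : da * db ≤ ∑ j, hammingNorm fun i => M i j := by
  obtain ⟨i₀, hi₀⟩ : ∃ i, M i ≠ 0 := by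
    by_contra! h
    exact hM0 (funext h)
  set S : Finset κ := {j | M i₀ j ≠ 0}
  have hS : db ≤ #S := hB ⟨M i₀, hM.2 i₀, hi₀, rfl⟩
  calc da * db ≤ da * #S := Nat.mul_le_mul_left da hS
    _ = ∑ _j ∈ S, da := by rw [sum_const, smul_eq_mul, mul_comm]
    _ ≤ ∑ j ∈ S, hammingNorm fun i => M i j := sum_le_sum fun j hj =>
        hA ⟨_, hM.1 j, fun h => (mem_filter.1 hj).2 (congrFun h i₀), rfl⟩
    _ ≤ ∑ j, hammingNorm fun i => M i j := sum_le_sum_of_subset (subset_univ _)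

theorem isLeast_nonzeroWeights_serializedProductCode {da db : ℕ}
    (hA : IsLeast A.nonzeroWeights da) (hB : IsLeast B.nonzeroWeights db) :
    IsLeast (serializedProductCode e A B).nonzeroWeights (da * db) := by
  constructor
  · obtain ⟨a, ha, ha0, rfl⟩ := hA.1
    obtain ⟨b, hb, hb0, rfl⟩ := hB.1
    have hw : hammingNorm (serialize F e fun i j => a i * b j) = hammingNorm a * hammingNorm b := by
      rw [hammingNorm_serialize, sum_hammingNorm_outer]
    refine ⟨_, Submodule.mem_map_of_mem (outer_mem_productCode ha hb), ?_, hw.symm⟩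
    rw [← hammingNorm_ne_zero_iff, LinearEquiv.coe_coe, hw]
    exact mul_ne_zero (hammingNorm_ne_zero_iff.2 ha0) (hammingNorm_ne_zero_iff.2 hb0)
  · rintro _ ⟨_, ⟨M, hM, rfl⟩, hM0, rfl⟩
    rw [LinearEquiv.coe_coe, hammingNorm_serialize]
    exact le_sum_hammingNorm_of_mem_productCode hA.2 hB.2 hM (by simpa using hM0)

end Weights

end ProductCode

theorem cyclic_product_code_general
    {F : Type*} [Field F] [DecidableEq F]
    (na nb ka kb da db : ℕ) [NeZero na] [NeZero nb]
    (hna : 0 < na) (hnb : 0 < nb)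
    (hcop : Nat.Coprime na nb)
    (A : Submodule F (Fin na → F)) (B : Submodule F (Fin nb → F))
    (hAcyc : ∀ c ∈ A, (fun i : Fin na => c (i - 1)) ∈ A)
    (hBcyc : ∀ c ∈ B, (fun i : Fin nb => c (i - 1)) ∈ B)
    (hAdim : Module.finrank F A = ka) (hBdim : Module.finrank F B = kb)
    (hAdist : IsLeast {w | ∃ c : Fin na → F, c ∈ A ∧ c ≠ 0 ∧ w = hammingNorm c} da)
    (hBdist : IsLeast {w | ∃ c : Fin nb → F, c ∈ B ∧ c ≠ 0 ∧ w = hammingNorm c} db) :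
    ∃ P : Submodule F (Fin (na * nb) → F),
      (∀ w : Fin (na * nb) → F, w ∈ P ↔
        ∃ M : Fin na → Fin nb → F,
          (∀ j : Fin nb, (fun i => M i j) ∈ A) ∧
          (∀ i : Fin na, (fun j => M i j) ∈ B) ∧
          ∀ ℓ : Fin (na * nb),
            w ℓ = M ⟨(ℓ : ℕ) % na, Nat.mod_lt _ hna⟩ ⟨(ℓ : ℕ) % nb, Nat.mod_lt _ hnb⟩) ∧
      (∀ w ∈ P, (fun ℓ : Fin (na * nb) => w (ℓ - 1)) ∈ P) ∧
      Module.finrank F P = ka * kb ∧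
      IsLeast {w | ∃ c : Fin (na * nb) → F, c ∈ P ∧ c ≠ 0 ∧ w = hammingNorm c}
        (da * db) := by
  refine ⟨serializedProductCode (finMulEquivProdOfCoprime hcop) A B, fun w => ?_,
    fun _ => shift_mem_serializedProductCode (finMulEquivProdOfCoprime_sub_one hcop) hAcyc hBcyc,
    by rw [finrank_serializedProductCode, hAdim, hBdim],
    isLeast_nonzeroWeights_serializedProductCode hAdist hBdist⟩
  rw [mem_serializedProductCode]
  constructor
  · rintro ⟨M, ⟨hcol, hrow⟩, rfl⟩
    exact ⟨M, hcol, hrow, fun ℓ => rfl⟩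
  · rintro ⟨M, hcol, hrow, hw⟩
    exact ⟨M, ⟨hcol, hrow⟩, funext fun ℓ => (hw ℓ).symm⟩

/-- **Cyclic product codes (Burton–Weldon).**  Let `A` and `B` be linear cyclic codes
over `F_q` with parameters `[n_a, k_a, d_a]` and `[n_b, k_b, d_b]`, where
`gcd(n_a, n_b) = 1`.  Then the product code `A ⊗ B`, serialized by the
Chinese-remainder ordering `ℓ ↦ (ℓ mod n_a, ℓ mod n_b)`, is a linear cyclic code over
`F_q` of length `n_a n_b`, dimension `k_a k_b` and minimum Hamming distance `d_a d_b`. -/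
theorem cyclic_product_code
    {F : Type*} [Field F] [Fintype F] [DecidableEq F]
    (na nb ka kb da db : ℕ) [NeZero na] [NeZero nb]
    (hna : 0 < na) (hnb : 0 < nb)
    (hcop : Nat.Coprime na nb)
    (A : Submodule F (Fin na → F)) (B : Submodule F (Fin nb → F))
    (hAcyc : ∀ c ∈ A, (fun i : Fin na => c (i - 1)) ∈ A)
    (hBcyc : ∀ c ∈ B, (fun i : Fin nb => c (i - 1)) ∈ B)
    (hAdim : Module.finrank F A = ka) (hBdim : Module.finrank F B = kb)
    (hAdist : IsLeast {w | ∃ c : Fin na → F, c ∈ A ∧ c ≠ 0 ∧ w = hammingNorm c} da)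
    (hBdist : IsLeast {w | ∃ c : Fin nb → F, c ∈ B ∧ c ≠ 0 ∧ w = hammingNorm c} db) :
    ∃ P : Submodule F (Fin (na * nb) → F),
      (∀ w : Fin (na * nb) → F, w ∈ P ↔
        ∃ M : Fin na → Fin nb → F,
          (∀ j : Fin nb, (fun i => M i j) ∈ A) ∧
          (∀ i : Fin na, (fun j => M i j) ∈ B) ∧
          ∀ ℓ : Fin (na * nb),
            w ℓ = M ⟨(ℓ : ℕ) % na, Nat.mod_lt _ hna⟩ ⟨(ℓ : ℕ) % nb, Nat.mod_lt _ hnb⟩) ∧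
      (∀ w ∈ P, (fun ℓ : Fin (na * nb) => w (ℓ - 1)) ∈ P) ∧
      Module.finrank F P = ka * kb ∧
      IsLeast {w | ∃ c : Fin (na * nb) → F, c ∈ P ∧ c ≠ 0 ∧ w = hammingNorm c}
        (da * db) :=
  cyclic_product_code_general na nb ka kb da db hna hnb hcop A B hAcyc hBcyc hAdim hBdim hAdist
    hBdist
end

section
/- Let A be an [n_a = p^s·n'_a, k_a, d_a] repeated-root cyclic code over F_q (q a power of the prime p, gcd(n'_a, p) = 1) and let B be an [n_b, k_b, d_b] simple-root cyclic code over F_q with gcd(n_a, n_b) = 1. Let α be an element of order n'_a and β an element of order n_b in extension fields of F_q, and let integers f_a, f_b and nonzero integers m_a, m_b with gcd(n'_a, m_a) = gcd(n_b, m_b) = 1 be given. Assume there is an integer δ ≥ 2 such that for all codewords a(X) ∈ A and b(X) ∈ B the formal power series Σ_{i=0}^∞ a^{[p^s−1]}(α^{f_a + i m_a}) · b(β^{f_b + i m_b}) X^i is congruent to 0 modulo X^{δ−1}. Then the minimum Hamming distance of A satisfies d_a ≥ ⌈δ / d_b⌉. -/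
/-!
Cyclic shifts preserve the code `A` and the weight, so a nonzero codeword may be assumed to have
a nonzero coefficient at position `p^s - 1`. In characteristic `p`, Lucas' theorem gives
`C(m + p^s - 1, p^s - 1) = [p^s ∣ m]`, hence `a^{[p^s-1]}(X) = g(X^{p^s})`, where `g` collects the
coefficients of `a` at the positions `≡ -1 (mod p^s)`: `g ≠ 0`, `wt g ≤ wt a` and `deg g < n'_a`.
For `b ∈ B` of weight `d_b`, the hypothesis then says that the first `δ - 1` power sums of the
`wt g · d_b` ratios `α^{p^s m_a u} β^{m_b k}` (weighted by `g_u b_k α^{p^s f_a u} β^{f_b k}`)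
vanish. These ratios are pairwise distinct because `α^{p^s}` and `β` have coprime orders and
`m_a, m_b` are units modulo them, so the Vandermonde matrix forces `δ - 1 < wt g · d_b`.
-/

open Polynomial

theorem Nat.choose_sub_one_eq_ite_of_lt {p x : ℕ} (hx : x < p) :
    x.choose (p - 1) = if x = p - 1 then 1 else 0 := by
  split_ifs with h
  · rw [h, Nat.choose_self]
  · exact Nat.choose_eq_zero_of_lt (by omega)

theorem CharP.cast_choose_add_pow_sub_one (R : Type*) [Ring R] (p : ℕ) [hp : Fact p.Prime]
    [CharP R p] (s m : ℕ) :
    ((m + (p ^ s - 1)).choose (p ^ s - 1) : R) = if p ^ s ∣ m then 1 else 0 := by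
  induction s generalizing m with
  | zero => simp
  | succ s ih =>
    have hp1 := hp.out.one_lt
    have hps : 1 ≤ p ^ s := Nat.one_le_pow _ _ hp.out.pos
    have hk : p ^ (s + 1) - 1 = (p - 1) + p * (p ^ s - 1) := by
      have : p ≤ p * p ^ s := Nat.le_mul_of_pos_right p hps
      rw [pow_succ', Nat.mul_sub, mul_one]; omega
    -- Lucas: the last base-`p` digit of `p^(s+1) - 1` is `p - 1`, the others form `p^s - 1`.
    have hlucas := CharP.natCast_eq_natCast' R p
      (Choose.choose_modEq_choose_mod_mul_choose_div_nat (n := m + (p ^ (s + 1) - 1))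
        (k := p ^ (s + 1) - 1) (p := p))
    rw [hlucas, hk, ← add_assoc, Nat.add_mul_mod_self_left, Nat.add_mul_mod_self_left,
      Nat.add_mul_div_left _ _ hp.out.pos, Nat.add_mul_div_left _ _ hp.out.pos,
      Nat.mod_eq_of_lt (by omega : p - 1 < p), Nat.div_eq_of_lt (by omega : p - 1 < p),
      zero_add, Nat.choose_sub_one_eq_ite_of_lt (Nat.mod_lt _ hp.out.pos)]
    by_cases hm : p ∣ m
    · obtain ⟨m, rfl⟩ := hm
      have hmod : (p * m + (p - 1)) % p = p - 1 := by
        rw [add_comm, Nat.add_mul_mod_self_left, Nat.mod_eq_of_lt (by omega)]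
      have hdiv : (p * m + (p - 1)) / p = m := by
        rw [add_comm, Nat.add_mul_div_left _ _ hp.out.pos, Nat.div_eq_of_lt (by omega), zero_add]
      simp only [hmod, hdiv, if_true, one_mul, ih, pow_succ',
        Nat.mul_dvd_mul_iff_left hp.out.pos]
    · have hne : (m + (p - 1)) % p ≠ p - 1 := fun h => hm <| Nat.modEq_zero_iff_dvd.mp <|
        Nat.ModEq.add_right_cancel' (p - 1) <| by
          rw [Nat.ModEq, h, zero_add, Nat.mod_eq_of_lt (by omega)]
      rw [if_neg hne, zero_mul, Nat.cast_zero,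
        if_neg fun h => hm ((dvd_pow_self p s.succ_ne_zero).trans h)]

section HasseDeriv

variable {R : Type*} [CommRing R] (p : ℕ) [Fact p.Prime] [CharP R p] (s : ℕ)

theorem coeff_hasseDeriv_pow_sub_one (f : R[X]) (m : ℕ) :
    (hasseDeriv (p ^ s - 1) f).coeff m = if p ^ s ∣ m then f.coeff (m + (p ^ s - 1)) else 0 := by
  rw [hasseDeriv_coeff, CharP.cast_choose_add_pow_sub_one R p s m]
  split_ifs <;> simp

theorem coeff_contract_hasseDeriv_pow_sub_one (f : R[X]) (u : ℕ) :
    (contract (p ^ s) (hasseDeriv (p ^ s - 1) f)).coeff u = f.coeff (u * p ^ s + (p ^ s - 1)) := by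
  rw [coeff_contract (pow_ne_zero s (Fact.out : p.Prime).ne_zero),
    coeff_hasseDeriv_pow_sub_one, if_pos (dvd_mul_left _ _)]

theorem expand_contract_hasseDeriv_pow_sub_one (f : R[X]) :
    expand R (p ^ s) (contract (p ^ s) (hasseDeriv (p ^ s - 1) f)) = hasseDeriv (p ^ s - 1) f := by
  have hq : 0 < p ^ s := pow_pos (Fact.out : p.Prime).pos s
  ext m
  rw [coeff_expand hq, coeff_hasseDeriv_pow_sub_one]
  split_ifs with h
  · rw [coeff_contract_hasseDeriv_pow_sub_one, Nat.div_mul_cancel h]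
  · rfl

theorem aeval_hasseDeriv_pow_sub_one {A : Type*} [CommSemiring A] [Algebra R A] (f : R[X]) (x : A) :
    aeval x (hasseDeriv (p ^ s - 1) f) =
      aeval (x ^ p ^ s) (contract (p ^ s) (hasseDeriv (p ^ s - 1) f)) := by
  rw [← expand_aeval, expand_contract_hasseDeriv_pow_sub_one]

theorem card_support_contract_hasseDeriv_pow_sub_one_le (f : R[X]) :
    (contract (p ^ s) (hasseDeriv (p ^ s - 1) f)).support.card ≤ f.support.card := by
  refine Finset.card_le_card_of_injOn (fun u => u * p ^ s + (p ^ s - 1)) (fun u hu => ?_)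
    fun u _ v _ huv => ?_
  · simpa [coeff_contract_hasseDeriv_pow_sub_one] using hu
  · simpa [(Fact.out : p.Prime).ne_zero] using huv

theorem degree_contract_hasseDeriv_pow_sub_one_lt {f : R[X]} {N : ℕ}
    (hf : f.degree < (p ^ s * N : ℕ)) :
    (contract (p ^ s) (hasseDeriv (p ^ s - 1) f)).degree < N := by
  rw [degree_lt_iff_coeff_zero]
  intro u hu
  rw [coeff_contract_hasseDeriv_pow_sub_one]
  refine coeff_eq_zero_of_degree_lt (hf.trans_le ?_)
  exact_mod_cast (Nat.mul_le_mul_left _ hu).trans ((mul_comm _ _).le.trans (Nat.le_add_right _ _))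

end HasseDeriv

section CyclicShift

variable {R : Type*} [CommRing R] (n r : ℕ)

noncomputable def cyclicShift (a : R[X]) : R[X] :=
  ∑ j ∈ a.support, monomial ((j + r) % n) (a.coeff j)

theorem X_pow_sub_one_dvd_X_pow_mul_sub_cyclicShift (a : R[X]) :
    (X ^ n - 1 : R[X]) ∣ X ^ r * a - cyclicShift n r a := by
  have ha : X ^ r * a = ∑ j ∈ a.support, monomial (j + r) (a.coeff j) := by
    simp_rw [← X_pow_mul_monomial, ← Finset.mul_sum, ← as_sum_support]
  rw [ha, cyclicShift, ← Finset.sum_sub_distrib]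
  refine Finset.dvd_sum fun j _ => ?_
  have hsplit : monomial (j + r) (a.coeff j) - monomial ((j + r) % n) (a.coeff j) =
      monomial ((j + r) % n) (a.coeff j) * (X ^ (n * ((j + r) / n)) - 1) := by
    rw [mul_sub, mul_one, monomial_mul_X_pow, Nat.mod_add_div]
  rw [hsplit]
  exact (pow_one_sub_dvd_pow_mul_sub_one X n _).mul_left _

theorem dvd_cyclicShift {g a : R[X]} (hg : g ∣ X ^ n - 1) (ha : g ∣ a) :
    g ∣ cyclicShift n r a := by
  have h := dvd_sub (ha.mul_left (X ^ r))
    (hg.trans (X_pow_sub_one_dvd_X_pow_mul_sub_cyclicShift n r a))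
  rwa [sub_sub_cancel] at h

theorem degree_cyclicShift_lt (hn : 0 < n) (a : R[X]) : (cyclicShift n r a).degree < n := by
  rw [degree_lt_iff_coeff_zero]
  intro m hm
  simp only [cyclicShift, finsetSum_coeff, coeff_monomial]
  exact Finset.sum_eq_zero fun j _ => if_neg fun h => by have := Nat.mod_lt (j + r) hn; omega

theorem card_support_cyclicShift_le (a : R[X]) :
    (cyclicShift n r a).support.card ≤ a.support.card := by
  classical
  refine (Finset.card_le_card fun m hm => ?_).trans
    (Finset.card_image_le (f := fun j => (j + r) % n))
  simp only [cyclicShift, mem_support_iff, finsetSum_coeff, coeff_monomial] at hm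
  obtain ⟨j, hj, hjm⟩ := Finset.exists_ne_zero_of_sum_ne_zero hm
  exact Finset.mem_image.mpr ⟨j, hj, by_contra fun h => hjm (if_neg h)⟩

theorem coeff_cyclicShift_add_mod {a : R[X]} (ha : a.degree < n) {j : ℕ} (hj : j < n) :
    (cyclicShift n r a).coeff ((j + r) % n) = a.coeff j := by
  have hlt : ∀ i ∈ a.support, i < n := fun i hi => by
    exact_mod_cast (le_degree_of_mem_supp i hi).trans_lt ha
  simp only [cyclicShift, finsetSum_coeff, coeff_monomial]
  rw [Finset.sum_eq_single j]
  · rw [if_pos rfl]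
  · intro i hi hij
    refine if_neg fun h => hij ?_
    have := Nat.ModEq.add_right_cancel' r h
    rwa [Nat.ModEq, Nat.mod_eq_of_lt (hlt i hi), Nat.mod_eq_of_lt hj] at this
  · intro hj'
    rw [if_pos rfl, notMem_support_iff.mp hj']

theorem exists_cyclicShift_coeff_ne_zero {a : R[X]} (ha0 : a ≠ 0) (ha : a.degree < n) {m : ℕ}
    (hm : m < n) : ∃ r, (cyclicShift n r a).coeff m ≠ 0 := by
  obtain ⟨j, hj⟩ := support_nonempty.mpr ha0
  have hjn : j < n := by exact_mod_cast (le_degree_of_mem_supp j hj).trans_lt ha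
  refine ⟨n - j + m, ?_⟩
  have h := coeff_cyclicShift_add_mod n (n - j + m) ha hjn
  rw [show j + (n - j + m) = m + n by omega, Nat.add_mod_right, Nat.mod_eq_of_lt hm] at h
  rwa [h, ← mem_support_iff]

end CyclicShift

theorem Finset.eq_zero_of_forall_sum_mul_pow_eq_zero {K ι : Type*} [Field K] (s : Finset ι)
    {w ρ : ι → K} (hρ : Set.InjOn ρ s) (h : ∀ i < s.card, ∑ l ∈ s, w l * ρ l ^ i = 0) :
    ∀ l ∈ s, w l = 0 := by
  set e := s.equivFin.symm
  have hv := Matrix.eq_zero_of_forall_pow_sum_mul_pow_eq_zero (f := fun j => ρ (e j))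
    (v := fun j => w (e j)) (fun j j' hj => e.injective (Subtype.ext (hρ (e j).2 (e j').2 hj)))
    fun i => (e.sum_comp fun l => w l * ρ l ^ (i : ℕ)).trans
      ((Finset.sum_coe_sort s _).trans (h i i.isLt))
  intro l hl
  simpa [e] using congrFun hv (s.equivFin ⟨l, hl⟩)

section OrderOf

variable {G : Type*} [CommGroup G]

theorem zpow_mul_natCast_injOn {x : G} {m : ℤ} (hm : IsCoprime (orderOf x : ℤ) m) :
    Set.InjOn (fun u : ℕ => x ^ (m * u)) (Set.Iio (orderOf x)) := by
  intro u hu u' hu' h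
  have hdvd : (orderOf x : ℤ) ∣ m * (u - u') := by
    rw [mul_sub]; exact orderOf_dvd_sub_iff_zpow_eq_zpow.mpr h
  have hmod : u' ≡ u [ZMOD orderOf x] := Int.modEq_iff_dvd.mpr (hm.dvd_of_dvd_mul_left hdvd)
  exact ((Int.natCast_modEq_iff.mp hmod).eq_of_lt_of_lt hu' hu).symm

theorem zpow_mul_zpow_injOn {x y : G} (hxy : (orderOf x).Coprime (orderOf y)) {m₁ m₂ : ℤ}
    (hm₁ : IsCoprime (orderOf x : ℤ) m₁) (hm₂ : IsCoprime (orderOf y : ℤ) m₂) :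
    Set.InjOn (fun l : ℕ × ℕ => x ^ (m₁ * l.1) * y ^ (m₂ * l.2))
      (Set.Iio (orderOf x) ×ˢ Set.Iio (orderOf y)) := by
  rintro ⟨u, k⟩ ⟨hu, hk⟩ ⟨u', k'⟩ ⟨hu', hk'⟩ h
  set z := x ^ (m₁ * u) / x ^ (m₁ * u')
  have hz : z = y ^ (m₂ * k') / y ^ (m₂ * k) := by
    simp only at h; rw [div_eq_div_iff_mul_eq_mul, mul_comm (y ^ _), h, mul_comm]
  have hzx : z ∈ Subgroup.zpowers x :=
    div_mem (zpow_mem (Subgroup.mem_zpowers x) _) (zpow_mem (Subgroup.mem_zpowers x) _)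
  have hzy : z ∈ Subgroup.zpowers y :=
    hz ▸ div_mem (zpow_mem (Subgroup.mem_zpowers y) _) (zpow_mem (Subgroup.mem_zpowers y) _)
  have hz1 : z = 1 := orderOf_eq_one_iff.mp <| Nat.eq_one_of_dvd_coprimes hxy
    (orderOf_dvd_of_mem_zpowers hzx) (orderOf_dvd_of_mem_zpowers hzy)
  have huu := zpow_mul_natCast_injOn hm₁ hu hu' (div_eq_one.mp hz1)
  have hkk := zpow_mul_natCast_injOn hm₂ hk' hk (div_eq_one.mp (hz ▸ hz1))
  exact Prod.ext huu hkk.symm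

end OrderOf

theorem aeval_units_zpow_eq_sum {F K : Type*} [CommSemiring F] [CommRing K] [Algebra F K]
    (g : F[X]) (x : Kˣ) (f m : ℤ) (i : ℕ) :
    aeval ((x ^ (f + (i : ℤ) * m) : Kˣ) : K) g = ∑ u ∈ g.support,
      algebraMap F K (g.coeff u) * ((x ^ (f * u) : Kˣ) : K) * ((x ^ (m * u) : Kˣ) : K) ^ i := by
  rw [aeval_def, eval₂_eq_sum, Polynomial.sum_def]
  refine Finset.sum_congr rfl fun u _ => ?_
  rw [mul_assoc, ← Units.val_pow_eq_pow_val, ← Units.val_pow_eq_pow_val, ← Units.val_mul,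
    ← zpow_natCast, ← zpow_natCast _ i, ← zpow_mul, ← zpow_mul, ← zpow_add]
  ring_nf

theorem lt_card_support_mul_card_support_of_aeval_mul_aeval_eq_zero {F K : Type*} [Field F]
    [Field K] [Algebra F K] {x y : Kˣ} (hxy : (orderOf x).Coprime (orderOf y)) {f₁ f₂ m₁ m₂ : ℤ}
    (hm₁ : IsCoprime (orderOf x : ℤ) m₁) (hm₂ : IsCoprime (orderOf y : ℤ) m₂) {g b : F[X]}
    (hg : g ≠ 0) (hb : b ≠ 0) (hgdeg : g.degree < orderOf x) (hbdeg : b.degree < orderOf y)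
    {N : ℕ} (h : ∀ i < N, aeval ((x ^ (f₁ + (i : ℤ) * m₁) : Kˣ) : K) g *
      aeval ((y ^ (f₂ + (i : ℤ) * m₂) : Kˣ) : K) b = 0) :
    N < g.support.card * b.support.card := by
  by_contra! hN
  set T := g.support ×ˢ b.support
  set w : ℕ × ℕ → K := fun l => algebraMap F K (g.coeff l.1 * b.coeff l.2) *
    ((x ^ (f₁ * l.1) * y ^ (f₂ * l.2) : Kˣ) : K)
  set ρ : ℕ × ℕ → K := fun l => ((x ^ (m₁ * l.1) * y ^ (m₂ * l.2) : Kˣ) : K)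
  have hsum : ∀ i < T.card, ∑ l ∈ T, w l * ρ l ^ i = 0 := by
    intro i hi
    rw [← h i (hi.trans_le (Finset.card_product _ _ ▸ hN)), aeval_units_zpow_eq_sum,
      aeval_units_zpow_eq_sum, Finset.sum_mul_sum, Finset.sum_product]
    refine Finset.sum_congr rfl fun u _ => Finset.sum_congr rfl fun k _ => ?_
    simp only [w, ρ, map_mul, Units.val_mul, mul_pow]
    ring
  have hTlt : ∀ l ∈ T, l ∈ Set.Iio (orderOf x) ×ˢ Set.Iio (orderOf y) := fun l hl => by
    obtain ⟨hl₁, hl₂⟩ := Finset.mem_product.mp hl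
    exact ⟨by exact_mod_cast (le_degree_of_mem_supp _ hl₁).trans_lt hgdeg,
      by exact_mod_cast (le_degree_of_mem_supp _ hl₂).trans_lt hbdeg⟩
  have hρ : Set.InjOn ρ T := fun l hl l' hl' hll' =>
    zpow_mul_zpow_injOn hxy hm₁ hm₂ (hTlt l hl) (hTlt l' hl') (Units.ext hll')
  have hT : (g.natDegree, b.natDegree) ∈ T := Finset.mem_product.mpr
    ⟨natDegree_mem_support_of_nonzero hg, natDegree_mem_support_of_nonzero hb⟩
  refine mul_ne_zero ?_ (Units.ne_zero _)
    (Finset.eq_zero_of_forall_sum_mul_pow_eq_zero T hρ hsum _ hT)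
  rw [map_ne_zero_iff _ (algebraMap F K).injective]
  exact mul_ne_zero (leadingCoeff_ne_zero.mpr hg) (leadingCoeff_ne_zero.mpr hb)

theorem repeatedRoot_product_code_bound_general
    {F K : Type*} [Field F] [Fintype F] [Field K] [Algebra F K]
    (p t s n'a nb : ℕ) (hp : p.Prime) (hq : Fintype.card F = p ^ t)
    (hn'a : Nat.Coprime n'a p)
    (hcop : Nat.Coprime (p ^ s * n'a) nb)
    (ga gb : F[X]) (hga_dvd : ga ∣ X ^ (p ^ s * n'a) - 1)
    (α β : Kˣ) (hα : orderOf α = n'a) (hβ : orderOf β = nb)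
    (fa fb ma mb : ℤ)
    (hma' : Int.gcd (n'a : ℤ) ma = 1) (hmb' : Int.gcd (nb : ℤ) mb = 1)
    (δ db : ℕ)
    (hBdist : IsLeast {w | ∃ b : F[X],
        b.degree < ((nb : ℕ) : WithBot ℕ) ∧ gb ∣ b ∧ b ≠ 0 ∧ w = b.support.card} db)
    (hzero : ∀ a : F[X], a.degree < ((p ^ s * n'a : ℕ) : WithBot ℕ) → ga ∣ a →
      ∀ b : F[X], b.degree < ((nb : ℕ) : WithBot ℕ) → gb ∣ b →
      ∀ i < δ - 1,
        aeval ((α ^ (fa + (i : ℤ) * ma) : Kˣ) : K) (hasseDeriv (p ^ s - 1) a) *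
          aeval ((β ^ (fb + (i : ℤ) * mb) : Kˣ) : K) b = 0) :
    ∀ a : F[X], a.degree < ((p ^ s * n'a : ℕ) : WithBot ℕ) → ga ∣ a → a ≠ 0 →
      δ ⌈/⌉ db ≤ a.support.card := by
  have := Fact.mk hp
  have := charP_of_card_eq_prime_pow (R := F) hq
  obtain ⟨⟨b, hbdeg, hgbb, hb0, rfl⟩, -⟩ := hBdist
  intro a hadeg hgaa ha0
  have hn'a0 : 0 < n'a := Nat.pos_of_ne_zero fun h => ha0 (by simpa [h] using hadeg)
  have hps : p ^ s - 1 < p ^ s * n'a :=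
    (Nat.sub_lt (pow_pos hp.pos s) one_pos).trans_le (Nat.le_mul_of_pos_right _ hn'a0)
  obtain ⟨r, hr⟩ := exists_cyclicShift_coeff_ne_zero _ ha0 hadeg hps
  generalize ha' : cyclicShift (p ^ s * n'a) r a = a' at hr
  have ha'deg : a'.degree < (p ^ s * n'a : ℕ) := ha' ▸ degree_cyclicShift_lt _ r (by omega) a
  have hg0 : contract (p ^ s) (hasseDeriv (p ^ s - 1) a') ≠ 0 := fun h => hr <| by
    simpa [h] using (coeff_contract_hasseDeriv_pow_sub_one p s a' 0).symm
  have hαp : orderOf (α ^ p ^ s) = n'a := by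
    rw [Nat.Coprime.orderOf_pow (hα ▸ hn'a.pow_right s), hα]
  have hweight := lt_card_support_mul_card_support_of_aeval_mul_aeval_eq_zero (x := α ^ p ^ s)
    (y := β) (by rw [hαp, hβ]; exact Nat.Coprime.coprime_mul_left hcop)
    (by rw [hαp]; exact Int.isCoprime_iff_gcd_eq_one.mpr hma')
    (by rw [hβ]; exact Int.isCoprime_iff_gcd_eq_one.mpr hmb') hg0 hb0
    (hαp ▸ degree_contract_hasseDeriv_pow_sub_one_lt p s ha'deg) (hβ ▸ hbdeg) (N := δ - 1)
    fun i hi => by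
      have h := hzero a' ha'deg (ha' ▸ dvd_cyclicShift _ _ hga_dvd hgaa) b hbdeg hgbb i hi
      rwa [aeval_hasseDeriv_pow_sub_one p s, ← Units.val_pow_eq_pow_val, ← zpow_natCast,
        zpow_comm, zpow_natCast] at h
  rw [ceilDiv_le_iff_le_mul (Finset.card_pos.mpr (support_nonempty.mpr hb0))]
  calc δ ≤ (contract (p ^ s) (hasseDeriv (p ^ s - 1) a')).support.card * b.support.card := by
        omega
    _ ≤ a.support.card * b.support.card := Nat.mul_le_mul_right _
        ((card_support_contract_hasseDeriv_pow_sub_one_le p s a').trans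
          (ha' ▸ card_support_cyclicShift_le _ _ a))
    _ = _ := mul_comm _ _

/-- **Bound III: embedding into a repeated-root cyclic product code.**
Let `A` be the `[n_a = p^s n'_a, k_a, d_a]` repeated-root cyclic code with monic
generator `g_a` and `B` the `[n_b, k_b, d_b]` simple-root cyclic code with monic
generator `g_b` over `F_q`, with `gcd(n_a, n_b) = 1`; `B` has minimum distance `d_b`.
Let `α` have order `n'_a` and `β` have order `n_b` in an extension field `K`, and let
`f_a, f_b` and nonzero `m_a, m_b` with `gcd(n'_a, m_a) = gcd(n_b, m_b) = 1` be given.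
If for some `δ ≥ 2` and all codewords `a ∈ A`, `b ∈ B` the first `δ - 1` coefficients
of `Σ_i a^{[p^s-1]}(α^{f_a + i m_a}) · b(β^{f_b + i m_b}) X^i` vanish, then the minimum
Hamming distance of `A` is at least `⌈δ / d_b⌉`. -/
theorem repeatedRoot_product_code_bound
    {F K : Type*} [Field F] [Fintype F] [Field K] [Algebra F K]
    (p t s n'a nb : ℕ) (hp : p.Prime) (hq : Fintype.card F = p ^ t) (ht : 0 < t)
    (hn'a : Nat.Coprime n'a p) (hnbp : Nat.Coprime nb p)
    (hcop : Nat.Coprime (p ^ s * n'a) nb)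
    (ga gb : F[X]) (hga_monic : ga.Monic) (hga_dvd : ga ∣ X ^ (p ^ s * n'a) - 1)
    (hgb_monic : gb.Monic) (hgb_dvd : gb ∣ X ^ nb - 1)
    (α β : Kˣ) (hα : orderOf α = n'a) (hβ : orderOf β = nb)
    (fa fb ma mb : ℤ) (hma : ma ≠ 0) (hmb : mb ≠ 0)
    (hma' : Int.gcd (n'a : ℤ) ma = 1) (hmb' : Int.gcd (nb : ℤ) mb = 1)
    (δ db : ℕ) (hδ : 2 ≤ δ)
    (hBdist : IsLeast {w | ∃ b : F[X],
        b.degree < ((nb : ℕ) : WithBot ℕ) ∧ gb ∣ b ∧ b ≠ 0 ∧ w = b.support.card} db)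
    (hzero : ∀ a : F[X], a.degree < ((p ^ s * n'a : ℕ) : WithBot ℕ) → ga ∣ a →
      ∀ b : F[X], b.degree < ((nb : ℕ) : WithBot ℕ) → gb ∣ b →
      ∀ i < δ - 1,
        aeval ((α ^ (fa + (i : ℤ) * ma) : Kˣ) : K) (hasseDeriv (p ^ s - 1) a) *
          aeval ((β ^ (fb + (i : ℤ) * mb) : Kˣ) : K) b = 0) :
    ∀ a : F[X], a.degree < ((p ^ s * n'a : ℕ) : WithBot ℕ) → ga ∣ a → a ≠ 0 →
      δ ⌈/⌉ db ≤ a.support.card :=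
  repeatedRoot_product_code_bound_general p t s n'a nb hp hq hn'a hcop ga gb hga_dvd α β hα hβ fa fb
    ma mb hma' hmb' δ db hBdist hzero
end
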